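/- arXiv:0809.2243 — 3 statements merged into one kernel-verified Lean document; each statement's English description precedes it below -/
import Mathlib

section
/- For all real numbers α, β ∈ [0,1]: 2·h((α+β)/2) − h(α) − h(β) ≥ (α − β)², where h is the binary entropy function with natural logarithm. -/
/-!
Since `h''(p) = -1 / (p (1 - p)) ≤ -4` on `(0, 1)`, the function `h(p) + 2 p²` is concave, i.e.
`h` is `4`-strongly concave on `[0, 1]`. Midpoint strong concavity with modulus `m` reads
`h(α) + h(β) + (m / 4) (α - β)² ≤ 2 h((α + β) / 2)`, which for `m = 4` is the claim.
-/

/-- The binary entropy function `h(p) = -p ln p - (1-p) ln (1-p)`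
(with the conventions `h 0 = h 1 = 0`, which hold automatically since
`Real.log 0 = 0`). -/
noncomputable def binEnt (p : ℝ) : ℝ := -(p * Real.log p) - (1 - p) * Real.log (1 - p)

open Real Set

lemma binEnt_eq_binEntropy (p : ℝ) : binEnt p = binEntropy p := by
  simp only [binEnt, binEntropy, log_inv]
  ring

lemma StrongConcaveOn.add_add_le_two_mul_midpoint {E : Type*} [NormedAddCommGroup E]
    [NormedSpace ℝ E] {s : Set E} {m : ℝ} {f : E → ℝ} (hf : StrongConcaveOn s m f)
    {x y : E} (hx : x ∈ s) (hy : y ∈ s) :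
    f x + f y + m / 4 * ‖x - y‖ ^ 2 ≤ 2 * f (midpoint ℝ x y) := by
  have h := hf.2 hx hy (show (0 : ℝ) ≤ 2⁻¹ by norm_num) (show (0 : ℝ) ≤ 2⁻¹ by norm_num)
    (by norm_num)
  rw [midpoint_eq_smul_add, invOf_eq_inv, smul_add]
  simp only [smul_eq_mul] at h
  linarith

lemma strongConcaveOn_binEntropy : StrongConcaveOn (Icc 0 1) 4 binEntropy := by
  rw [strongConcaveOn_iff_convex]
  simp only [norm_eq_abs, sq_abs]
  refine concaveOn_of_hasDerivWithinAt2_nonpos (convex_Icc 0 1)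
    (f' := fun p ↦ log (1 - p) - log p + 4 * p) (f'' := fun p ↦ -(1 - p)⁻¹ - p⁻¹ + 4)
    (by fun_prop) (fun p hp ↦ ?_) (fun p hp ↦ ?_) (fun p hp ↦ ?_)
  all_goals rw [interior_Icc] at hp; obtain ⟨hp0, hp1⟩ := hp
  · have h := (hasDerivAt_binEntropy hp0.ne' hp1.ne).add ((hasDerivAt_pow 2 p).const_mul (4 / 2))
    exact (h.congr_deriv (by ring)).hasDerivWithinAt
  · have h := ((((hasDerivAt_id p).const_sub 1).log (sub_pos.2 hp1).ne').sub
      (hasDerivAt_log hp0.ne')).add ((hasDerivAt_id p).const_mul 4)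
    exact (h.congr_deriv (by simp only [id]; field_simp)).hasDerivWithinAt
  · have : 4 ≤ (1 - p)⁻¹ + p⁻¹ := by
      rw [inv_add_inv (sub_pos.2 hp1).ne' hp0.ne', le_div_iff₀ (by nlinarith)]
      nlinarith [sq_nonneg (2 * p - 1)]
    linarith

/-- for all `α, β ∈ [0,1]`,
`2 h((α+β)/2) - h(α) - h(β) ≥ (α - β)²`. -/
theorem stmt_10 (α β : ℝ) (hα0 : 0 ≤ α) (hα1 : α ≤ 1) (hβ0 : 0 ≤ β) (hβ1 : β ≤ 1) :
    (α - β) ^ 2 ≤ 2 * binEnt ((α + β) / 2) - binEnt α - binEnt β := by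
  have h := strongConcaveOn_binEntropy.add_add_le_two_mul_midpoint
    (⟨hα0, hα1⟩ : α ∈ Icc (0 : ℝ) 1) ⟨hβ0, hβ1⟩
  rw [midpoint_eq_smul_add, smul_eq_mul, invOf_eq_inv, inv_mul_eq_div, norm_eq_abs, sq_abs] at h
  simp only [binEnt_eq_binEntropy]
  linarith
end

section
/- For every positive integer n: Γ(n+1, n) > n!/2, i.e. ∫_n^∞ t^n e^{−t} dt > (1/2)·∫_0^∞ t^n e^{−t} dt. Equivalently, the ratio Γ(n+1, 0)/Γ(n+1, n) is strictly less than 2. -/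
/-!
The density `f t = t ^ n * exp (-t)` peaks at `t = n` and is heavier to the right of its peak:
`f (n - u) ≤ f (n + u)` for `0 ≤ u ≤ n`. After the substitution `u = n x` this is the `n`-th power of
`(1 - x) * exp x ≤ (1 + x) * exp (-x)`, i.e. of `artanh x ≥ x`. Reflecting `[0, n]` about `n` therefore
gives `∫₀ⁿ f < ∫ₙ^{2n} f ≤ ∫ₙ^∞ f`, and since the two halves add up to `Γ(n + 1) = n!`, the upper
half exceeds `n! / 2`.
-/
open Real Set MeasureTheory

theorem one_sub_mul_exp_le_one_add_mul_exp_neg {x : ℝ} (hx : 0 ≤ x) :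
    (1 - x) * exp x ≤ (1 + x) * exp (-x) := by
  rcases le_or_gt 1 x with h1 | h1
  · nlinarith [exp_pos x, exp_pos (-x)]
  -- the first term of the series of `2 artanh x` with nonnegative terms
  have hlog : 2 * x ≤ log (1 + x) - log (1 - x) := by
    simpa using le_hasSum (hasSum_log_sub_log_of_abs_lt_one (abs_lt.2 ⟨by linarith, h1⟩)) 0
      (fun k _ => by positivity)
  have hexp : exp (2 * x) * (1 - x) ≤ 1 + x := by
    have := exp_le_exp.2 hlog
    rwa [exp_sub, exp_log (by linarith), exp_log (by linarith), le_div_iff₀ (by linarith)] at this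
  calc (1 - x) * exp x = exp (2 * x) * (1 - x) * exp (-x) := by
        rw [mul_comm (exp _), mul_assoc, ← exp_add]; ring_nf
    _ ≤ (1 + x) * exp (-x) := by gcongr

theorem sub_mul_exp_le_add_mul_exp_neg {a u : ℝ} (ha : 0 < a) (hu : 0 ≤ u) :
    (a - u) * exp (u / a) ≤ (a + u) * exp (-(u / a)) := by
  have h := mul_le_mul_of_nonneg_left
    (one_sub_mul_exp_le_one_add_mul_exp_neg (div_nonneg hu ha.le)) ha.le
  rwa [← mul_assoc, ← mul_assoc, mul_one_sub, mul_one_add, mul_div_cancel₀ _ ha.ne'] at h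

theorem pow_mul_exp_neg_sub_le_pow_mul_exp_neg_add {n : ℕ} (hn : 0 < n) {u : ℝ}
    (hu₀ : 0 ≤ u) (hun : u ≤ n) :
    (n - u) ^ n * exp (-(n - u)) ≤ (n + u) ^ n * exp (-(n + u)) := by
  have hn' : (0 : ℝ) < n := Nat.cast_pos.2 hn
  have key := pow_le_pow_left₀ (mul_nonneg (sub_nonneg.2 hun) (exp_pos _).le)
    (sub_mul_exp_le_add_mul_exp_neg hn' hu₀) n
  rw [mul_pow, mul_pow, ← exp_nat_mul, ← exp_nat_mul, mul_div_cancel₀ _ hn'.ne',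
    mul_neg, mul_div_cancel₀ _ hn'.ne'] at key
  calc (n - u) ^ n * exp (-(n - u)) = (n - u) ^ n * exp u * exp (-n) := by
        rw [mul_assoc, ← exp_add]; ring_nf
    _ ≤ (n + u) ^ n * exp (-u) * exp (-n) := by gcongr
    _ = (n + u) ^ n * exp (-(n + u)) := by rw [mul_assoc, ← exp_add]; ring_nf

theorem integrableOn_pow_mul_exp_neg_Ioi (n : ℕ) :
    IntegrableOn (fun t : ℝ => t ^ n * exp (-t)) (Ioi 0) := by
  refine (GammaIntegral_convergent (s := n + 1) (by positivity)).congr_fun (fun t _ => ?_)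
    measurableSet_Ioi
  simp [mul_comm]

theorem integral_pow_mul_exp_neg_Ioi (n : ℕ) :
    ∫ t in Ioi (0 : ℝ), t ^ n * exp (-t) = n.factorial := by
  rw [← Gamma_nat_eq_factorial, Gamma_eq_integral (by positivity)]
  refine setIntegral_congr_fun measurableSet_Ioi (fun t _ => ?_)
  simp [mul_comm]

theorem setIntegral_Ioc_lt_setIntegral_Ioi_of_reflect {f : ℝ → ℝ} {a : ℝ} (ha : 0 < a)
    (hf : Continuous f) (hint : IntegrableOn f (Ioi a)) (hnonneg : ∀ t, a < t → 0 ≤ f t)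
    (hle : ∀ u ∈ Icc 0 a, f (a - u) ≤ f (a + u)) (hlt : ∃ u ∈ Icc 0 a, f (a - u) < f (a + u)) :
    ∫ t in Ioc 0 a, f t < ∫ t in Ioi a, f t := by
  calc ∫ t in Ioc 0 a, f t = ∫ u in (0)..a, f (a - u) := by
        rw [intervalIntegral.integral_comp_sub_left, sub_self, sub_zero,
          intervalIntegral.integral_of_le ha.le]
    _ < ∫ u in (0)..a, f (a + u) :=
        intervalIntegral.integral_lt_integral_of_continuousOn_of_le_of_exists_lt ha
          (by fun_prop) (by fun_prop) (fun u hu => hle u (Ioc_subset_Icc_self hu)) hlt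
    _ = ∫ t in Ioc a (a + a), f t := by
        rw [intervalIntegral.integral_comp_add_left, add_zero,
          intervalIntegral.integral_of_le (by linarith)]
    _ ≤ ∫ t in Ioi a, f t :=
        setIntegral_mono_set hint
          (ae_restrict_of_forall_mem measurableSet_Ioi fun t ht => hnonneg t ht)
          Ioc_subset_Ioi_self.eventuallyLE

/-- for every positive integer `n`, `Γ(n+1, n) > n!/2`, i.e.
`∫_n^∞ t^n e^{-t} dt > (1/2) ∫_0^∞ t^n e^{-t} dt = n!/2`; equivalently the ratio
`Γ(n+1, 0) / Γ(n+1, n)` is strictly less than `2`. -/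
theorem stmt_13 (n : ℕ) (hn : 1 ≤ n) :
    (n.factorial : ℝ) / 2 < (∫ t in Set.Ioi (n : ℝ), t ^ n * Real.exp (-t)) ∧
      (∫ t in Set.Ioi (0 : ℝ), t ^ n * Real.exp (-t)) /
          (∫ t in Set.Ioi (n : ℝ), t ^ n * Real.exp (-t)) < 2 := by
  have hn' : (0 : ℝ) < n := Nat.cast_pos.2 hn
  have hint := integrableOn_pow_mul_exp_neg_Ioi n
  have hcompare : ∫ t in Ioc 0 (n : ℝ), t ^ n * exp (-t) < ∫ t in Ioi (n : ℝ), t ^ n * exp (-t) :=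
    setIntegral_Ioc_lt_setIntegral_Ioi_of_reflect hn' (by fun_prop)
      (hint.mono_set (Ioi_subset_Ioi hn'.le)) (fun t ht => by have := hn'.trans ht; positivity)
      (fun u hu => pow_mul_exp_neg_sub_le_pow_mul_exp_neg_add hn hu.1 hu.2)
      ⟨n, ⟨hn'.le, le_rfl⟩, by simp [zero_pow (Nat.one_le_iff_ne_zero.1 hn)]; positivity⟩
  have hsplit : (n.factorial : ℝ) =
      (∫ t in Ioc 0 (n : ℝ), t ^ n * exp (-t)) + ∫ t in Ioi (n : ℝ), t ^ n * exp (-t) := by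
    rw [← integral_pow_mul_exp_neg_Ioi, ← setIntegral_union (Ioc_disjoint_Ioi le_rfl)
      measurableSet_Ioi (hint.mono_set Ioc_subset_Ioi_self)
      (hint.mono_set (Ioi_subset_Ioi hn'.le)), Ioc_union_Ioi_eq_Ioi hn'.le]
  have hhalf : (n.factorial : ℝ) / 2 < ∫ t in Ioi (n : ℝ), t ^ n * exp (-t) := by linarith
  refine ⟨hhalf, ?_⟩
  rw [integral_pow_mul_exp_neg_Ioi, div_lt_iff₀ (lt_trans (by positivity) hhalf)]
  linarith
end

section
/- For all positive integers k and n: C(k+n, k+1)/C(2k+n, k+1) ≤ ((k+n−1)/(2k+n))^k < e^{−k(k+1)/(2k+n)}, where C(a,b) denotes the binomial coefficient. -/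
open Nat

lemma asc_prod (n k : ℕ) : ∏ i ∈ Finset.range k, (n + i) = n.ascFactorial k := by
  induction k with
  | zero => simp
  | succ m ih => rw [Finset.prod_range_succ, ih, Nat.ascFactorial_succ, mul_comm]

lemma key_nat (k n : ℕ) (hn : 0 < n) :
    (k + n).choose (k + 1) * (n + k + 1).ascFactorial k
      = (2 * k + n).choose (k + 1) * n.ascFactorial k := by
  have h1 : k + 1 ≤ k + n := by omega
  have h2 : k + 1 ≤ 2 * k + n := by omega
  have e1 : (k + n).choose (k + 1) * (k + 1)! * (n - 1)! = (k + n)! := by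
    have := Nat.choose_mul_factorial_mul_factorial h1
    rwa [show k + n - (k + 1) = n - 1 by omega] at this
  have e2 : (2 * k + n).choose (k + 1) * (k + 1)! * (n + k - 1)! = (2 * k + n)! := by
    have := Nat.choose_mul_factorial_mul_factorial h2
    rwa [show 2 * k + n - (k + 1) = n + k - 1 by omega] at this
  have e3 : (n + k)! * (n + k + 1).ascFactorial k = (n + k + k)! :=
    Nat.factorial_mul_ascFactorial (n + k) k
  have e4 : (n - 1)! * n.ascFactorial k = (n + k - 1)! :=
    Nat.factorial_mul_ascFactorial' n k hn
  have hpos : 0 < (k + 1)! * (n - 1)! * (n + k)! := by positivity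
  apply Nat.eq_of_mul_eq_mul_right hpos
  calc (k + n).choose (k + 1) * (n + k + 1).ascFactorial k * ((k + 1)! * (n - 1)! * (n + k)!)
      = ((k + n).choose (k + 1) * (k + 1)! * (n - 1)!) * ((n + k)! * (n + k + 1).ascFactorial k) := by ring
    _ = (k + n)! * (n + k + k)! := by rw [e1, e3]
    _ = (2 * k + n)! * (n + k)! := by
        rw [show k + n = n + k by omega, show n + k + k = 2 * k + n by omega, mul_comm]
    _ = (2 * k + n).choose (k + 1) * n.ascFactorial k * ((k + 1)! * (n - 1)! * (n + k)!) := by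
        rw [← e2, ← e4]; ring


/-- for all positive integers `k` and `n`,
`C(k+n, k+1) / C(2k+n, k+1) ≤ ((k+n-1)/(2k+n))^k < e^{-k(k+1)/(2k+n)}`. -/
theorem stmt_17 (k n : ℕ) (hk : 0 < k) (hn : 0 < n) :
    ((k + n).choose (k + 1) : ℝ) / ((2 * k + n).choose (k + 1) : ℝ) ≤
        (((k : ℝ) + (n : ℝ) - 1) / (2 * (k : ℝ) + (n : ℝ))) ^ k ∧
      (((k : ℝ) + (n : ℝ) - 1) / (2 * (k : ℝ) + (n : ℝ))) ^ k <
        Real.exp (-((k : ℝ) * ((k : ℝ) + 1)) / (2 * (k : ℝ) + (n : ℝ))) := by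
  have hk1 : (1:ℝ) ≤ (k:ℝ) := by exact_mod_cast hk
  have hn1 : (1:ℝ) ≤ (n:ℝ) := by exact_mod_cast hn
  have hd : (0:ℝ) < 2 * (k:ℝ) + n := by linarith
  set c : ℝ := ((k : ℝ) + (n : ℝ) - 1) / (2 * (k : ℝ) + (n : ℝ)) with hc
  have hc0 : 0 ≤ c := by apply div_nonneg <;> linarith
  constructor
  · -- first inequality
    have h2 : k + 1 ≤ 2 * k + n := by omega
    have hB : 0 < (n + k + 1).ascFactorial k := Nat.ascFactorial_pos (n + k) k
    have hC2 : 0 < (2 * k + n).choose (k + 1) := Nat.choose_pos h2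
    have hBr : (0:ℝ) < ((n + k + 1).ascFactorial k : ℝ) := by exact_mod_cast hB
    have hC2r : (0:ℝ) < ((2 * k + n).choose (k + 1) : ℝ) := by exact_mod_cast hC2
    have key : ((k + n).choose (k + 1) : ℝ) * ((n + k + 1).ascFactorial k : ℝ)
        = ((2 * k + n).choose (k + 1) : ℝ) * (n.ascFactorial k : ℝ) := by
      exact_mod_cast congrArg (Nat.cast (R := ℝ)) (key_nat k n hn)
    have hratio : ((k + n).choose (k + 1) : ℝ) / ((2 * k + n).choose (k + 1) : ℝ)
        = (n.ascFactorial k : ℝ) / ((n + k + 1).ascFactorial k : ℝ) := by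
      rw [div_eq_div_iff hC2r.ne' hBr.ne']; linarith [key]
    rw [hratio]
    have hA : (n.ascFactorial k : ℝ) = ∏ i ∈ Finset.range k, ((n:ℝ) + i) := by
      rw [← asc_prod]; push_cast; rfl
    have hB2 : ((n + k + 1).ascFactorial k : ℝ) = ∏ i ∈ Finset.range k, ((n:ℝ) + k + 1 + i) := by
      rw [← asc_prod]; push_cast; rfl
    rw [hA, hB2, ← Finset.prod_div_distrib]
    calc ∏ i ∈ Finset.range k, ((n:ℝ) + i) / ((n:ℝ) + k + 1 + i)
        ≤ ∏ _i ∈ Finset.range k, c := by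
          apply Finset.prod_le_prod
          · intro i _; positivity
          · intro i hi
            have hi' : (i:ℝ) + 1 ≤ (k:ℝ) := by
              exact_mod_cast Nat.succ_le_of_lt (Finset.mem_range.mp hi)
            rw [hc, div_le_div_iff₀ (by positivity) hd]
            nlinarith [hi', hk1, hn1]
      _ = c ^ k := by rw [Finset.prod_const, Finset.card_range]
  · -- second inequality
    set x : ℝ := ((k:ℝ) + 1) / (2 * (k:ℝ) + n) with hx
    have hx0 : 0 < x := by positivity
    have hcx : c = 1 - x := by rw [hc, hx]; field_simp; ring
    have hx1 : x ≤ 1 := by rw [hx, div_le_one hd]; linarith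
    have hlt : 1 - x < Real.exp (-x) := by
      have := Real.add_one_lt_exp (neg_ne_zero.mpr hx0.ne')
      linarith
    have hpow : c ^ k < Real.exp (-x) ^ k := by
      rw [hcx]
      exact pow_lt_pow_left₀ hlt (by linarith) hk.ne'
    calc c ^ k < Real.exp (-x) ^ k := hpow
      _ = Real.exp (-((k : ℝ) * ((k : ℝ) + 1)) / (2 * (k : ℝ) + (n : ℝ))) := by
          rw [← Real.exp_nat_mul]
          congr 1
          rw [hx]; field_simp
end
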